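/- Let A be a subspace of ℝ^n of dimension d, let e ∈ {1,…,n−1}, and let j ∈ {1,…,min(d,e) − g(d,e,n)}. Then A is (e,j)-irrational if and only if the orthogonal complement A^⊥ of A in ℝ^n is (n−e,j)-irrational. -/

import Mathlib

/-!
Since `Aᗮ ⊓ Bᗮ = (A ⊔ B)ᗮ`, we have `dim (Aᗮ ⊓ Bᗮ) = dim (A ⊓ B) + n - dim A - dim B`, and
`B ↦ Bᗮ` is an involution of the rational subspaces exchanging dimensions `e` and `n - e`. Under
this correspondence the inequality defining `(e,j)`-irrationality of `A` becomes the one defining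
`(n-e,j)`-irrationality of `Aᗮ`.

A rational subspace is the real span of a subspace `W` of `ℚⁿ`, and its orthogonal complement is
the real span of the dot-product orthogonal of `W`: the latter is contained in the former, and the
dimensions agree because `ℚ`-linearly independent rational vectors stay `ℝ`-linearly independent.
-/

noncomputable section

open Finset Module

/-- A vector of `ℝⁿ` with integer coordinates. -/
def IsIntVec {n : ℕ} (v : EuclideanSpace ℝ (Fin n)) : Prop :=
  ∀ i, ∃ z : ℤ, v i = (z : ℝ)

/-- A rational subspace of `ℝⁿ`: one spanned by vectors with rational coordinates. -/
def IsRationalSubspace {n : ℕ} (B : Submodule ℝ (EuclideanSpace ℝ (Fin n))) : Prop :=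
  ∃ s : Set (EuclideanSpace ℝ (Fin n)),
    (∀ v ∈ s, ∀ i, ∃ q : ℚ, v i = (q : ℝ)) ∧ Submodule.span ℝ s = B

/-- `A` is `(e,j)`-irrational: every rational subspace `B` of dimension `e` satisfies
`dim (A ⊓ B) < j + g(dim A, e, n)` where `g(d,e,n) = max 0 (d+e-n)`. -/
def IsIrrational {n : ℕ} (A : Submodule ℝ (EuclideanSpace ℝ (Fin n))) (e j : ℕ) : Prop :=
  ∀ B : Submodule ℝ (EuclideanSpace ℝ (Fin n)),
    IsRationalSubspace B → finrank ℝ B = e →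
      finrank ℝ ↥(A ⊓ B) < j + (finrank ℝ A + e - n)

/-- The angle `ω(X,Y) = ‖X∧Y‖ / (‖X‖·‖Y‖)`. -/
def omegaAngle {n : ℕ} (X Y : EuclideanSpace ℝ (Fin n)) : ℝ :=
  Real.sqrt (‖X‖ ^ 2 * ‖Y‖ ^ 2 - (inner ℝ X Y : ℝ) ^ 2) / (‖X‖ * ‖Y‖)

/-- First angle `ψ₁(A,B)` between two subspaces. -/
def psiOne {n : ℕ} (A B : Submodule ℝ (EuclideanSpace ℝ (Fin n))) : ℝ :=
  sInf {t | ∃ X ∈ A, X ≠ 0 ∧ ∃ Y ∈ B, Y ≠ 0 ∧ t = omegaAngle X Y}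

/-- `‖X₁ ∧ ⋯ ∧ X_e‖`, as the square root of the Gram determinant. -/
def gramNorm {n e : ℕ} (X : Fin e → EuclideanSpace ℝ (Fin n)) : ℝ :=
  Real.sqrt (Matrix.of fun i j : Fin e => (inner ℝ (X i) (X j) : ℝ)).det

/-- `X` is a `ℤ`-basis of the lattice `B ∩ ℤⁿ`. -/
def IsZBasis {n e : ℕ} (X : Fin e → EuclideanSpace ℝ (Fin n))
    (B : Submodule ℝ (EuclideanSpace ℝ (Fin n))) : Prop :=
  (∀ i, X i ∈ B) ∧ (∀ i, IsIntVec (X i)) ∧ LinearIndependent ℝ X ∧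
    ∀ v ∈ B, IsIntVec v → ∃ c : Fin e → ℤ, v = ∑ i, (c i : ℝ) • X i

/-- The height `H(B)` of a rational subspace: the common value of `‖X₁ ∧ ⋯ ∧ X_e‖`
over `ℤ`-bases of the lattice `B ∩ ℤⁿ`. -/
def height {n : ℕ} (B : Submodule ℝ (EuclideanSpace ℝ (Fin n))) : ℝ :=
  sSup {h | ∃ e : ℕ, ∃ X : Fin e → EuclideanSpace ℝ (Fin n), IsZBasis X B ∧ h = gramNorm X}

/-- The Diophantine exponent `μ_n(A|e)₁ ∈ ℝ ∪ {+∞}`. -/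
def diophExp {n : ℕ} (A : Submodule ℝ (EuclideanSpace ℝ (Fin n))) (e : ℕ) : EReal :=
  sSup {x : EReal | ∃ μ : ℝ, x = (μ : ℝ) ∧ 0 < μ ∧
    {B : Submodule ℝ (EuclideanSpace ℝ (Fin n)) |
      IsRationalSubspace B ∧ finrank ℝ B = e ∧ psiOne A B ≤ height B ^ (-μ)}.Infinite}

open Submodule

section RationalSubspace

variable {n : ℕ}

def ratVecToReal (n : ℕ) : (Fin n → ℚ) →ₗ[ℚ] EuclideanSpace ℝ (Fin n) :=
  (WithLp.linearEquiv 2 ℚ (Fin n → ℝ)).symm.toLinearMap ∘ₗ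
    LinearMap.compLeft (Algebra.linearMap ℚ ℝ) (Fin n)

lemma ratVecToReal_apply (v : Fin n → ℚ) (i : Fin n) : ratVecToReal n v i = (v i : ℝ) := rfl

lemma inner_ratVecToReal (v w : Fin n → ℚ) :
    inner ℝ (ratVecToReal n v) (ratVecToReal n w) = ((v ⬝ᵥ w : ℚ) : ℝ) := by
  simp [PiLp.inner_apply, ratVecToReal_apply, dotProduct, mul_comm]

lemma linearIndependent_ratVecToReal {ι : Type*} {v : ι → Fin n → ℚ}
    (hv : LinearIndependent ℚ v) : LinearIndependent ℝ (ratVecToReal n ∘ v) := by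
  have h : LinearIndependent ℝ (fun i => algebraMap ℚ ℝ ∘ v i) :=
    linearIndependent_algebraMap_comp_iff.2 hv
  exact h.map' (WithLp.linearEquiv 2 ℝ (Fin n → ℝ)).symm.toLinearMap
    (WithLp.linearEquiv 2 ℝ (Fin n → ℝ)).symm.ker

def realSpan (W : Submodule ℚ (Fin n → ℚ)) : Submodule ℝ (EuclideanSpace ℝ (Fin n)) :=
  span ℝ (ratVecToReal n '' W)

lemma realSpan_span (s : Set (Fin n → ℚ)) :
    realSpan (span ℚ s) = span ℝ (ratVecToReal n '' s) := by
  rw [realSpan, ← map_coe, map_span, span_span_of_tower]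

lemma finrank_realSpan (W : Submodule ℚ (Fin n → ℚ)) : finrank ℝ (realSpan W) = finrank ℚ W := by
  let b := Module.finBasis ℚ W
  have hb : span ℚ (Set.range (W.subtype ∘ b)) = W := by
    rw [Set.range_comp, span_image, b.span_eq, map_subtype_top]
  rw [← hb, realSpan_span, ← Set.range_comp, finrank_span_eq_card
    (linearIndependent_ratVecToReal (b.linearIndependent.map' _ W.ker_subtype)),
    Fintype.card_fin, finrank_span_eq_card (b.linearIndependent.map' _ W.ker_subtype),
    Fintype.card_fin]

lemma isRationalSubspace_realSpan (W : Submodule ℚ (Fin n → ℚ)) :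
    IsRationalSubspace (realSpan W) :=
  ⟨_, by rintro _ ⟨v, -, rfl⟩ i; exact ⟨v i, rfl⟩, rfl⟩

lemma IsRationalSubspace.exists_realSpan_eq {B : Submodule ℝ (EuclideanSpace ℝ (Fin n))}
    (hB : IsRationalSubspace B) : ∃ W : Submodule ℚ (Fin n → ℚ), realSpan W = B := by
  obtain ⟨s, hs, rfl⟩ := hB
  refine ⟨span ℚ (ratVecToReal n ⁻¹' s), ?_⟩
  rw [realSpan_span, Set.image_preimage_eq_of_subset]
  intro v hv
  choose q hq using hs v hv
  exact ⟨q, PiLp.ext fun i => (hq i).symm⟩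

lemma dotProductBilin_nondegenerate :
    (dotProductBilin ℚ ℚ : LinearMap.BilinForm ℚ (Fin n → ℚ)).Nondegenerate :=
  ⟨fun v hv => dotProduct_self_eq_zero.1 (hv v), fun v hv => dotProduct_self_eq_zero.1 (hv v)⟩

def dotOrthogonal (W : Submodule ℚ (Fin n → ℚ)) : Submodule ℚ (Fin n → ℚ) :=
  LinearMap.BilinForm.orthogonal (dotProductBilin ℚ ℚ) W

lemma realSpan_dotOrthogonal (W : Submodule ℚ (Fin n → ℚ)) :
    realSpan (dotOrthogonal W) = (realSpan W)ᗮ := by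
  have hle : realSpan (dotOrthogonal W) ≤ (realSpan W)ᗮ := by
    rw [← isOrtho_iff_le, realSpan, realSpan, isOrtho_span]
    rintro _ ⟨v, hv, rfl⟩ _ ⟨w, hw, rfl⟩
    have hvw : w ⬝ᵥ v = 0 := hv w hw
    rw [inner_ratVecToReal, dotProduct_comm, hvw, Rat.cast_zero]
  refine eq_of_le_of_finrank_eq hle ?_
  have hW := (realSpan W).finrank_add_finrank_orthogonal
  rw [finrank_realSpan, finrank_euclideanSpace_fin] at hW
  rw [finrank_realSpan, dotOrthogonal,
    LinearMap.BilinForm.finrank_orthogonal dotProductBilin_nondegenerate, Module.finrank_fin_fun]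
  omega

lemma IsRationalSubspace.orthogonal {B : Submodule ℝ (EuclideanSpace ℝ (Fin n))}
    (hB : IsRationalSubspace B) : IsRationalSubspace Bᗮ := by
  obtain ⟨W, rfl⟩ := hB.exists_realSpan_eq
  rw [← realSpan_dotOrthogonal]
  exact isRationalSubspace_realSpan _

end RationalSubspace

lemma Submodule.finrank_orthogonal_inf_orthogonal_add {𝕜 E : Type*} [RCLike 𝕜]
    [NormedAddCommGroup E] [InnerProductSpace 𝕜 E] [FiniteDimensional 𝕜 E]
    (A C : Submodule 𝕜 E) :
    finrank 𝕜 ↥(Aᗮ ⊓ Cᗮ) + finrank 𝕜 A + finrank 𝕜 C = finrank 𝕜 E + finrank 𝕜 ↥(A ⊓ C) := by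
  have hsup := (A ⊔ C).finrank_add_finrank_orthogonal
  have := finrank_sup_add_finrank_inf_eq A C
  rw [inf_orthogonal]
  omega

lemma IsIrrational.orthogonal {n e j : ℕ} {A : Submodule ℝ (EuclideanSpace ℝ (Fin n))}
    (he : e ≤ n) (hA : IsIrrational A e j) : IsIrrational Aᗮ (n - e) j := by
  intro B hB hBe
  have hdimB := B.finrank_add_finrank_orthogonal
  have hdimA := A.finrank_add_finrank_orthogonal
  have hAB := A.finrank_orthogonal_inf_orthogonal_add Bᗮ
  have hirr := hA Bᗮ hB.orthogonal (by rw [finrank_euclideanSpace_fin] at hdimB; omega)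
  rw [orthogonal_orthogonal] at hAB
  rw [finrank_euclideanSpace_fin] at hdimA hdimB hAB
  omega

theorem statement4 (n : ℕ) (A : Submodule ℝ (EuclideanSpace ℝ (Fin n))) (e j : ℕ)
    (he2 : e ≤ n - 1) :
    IsIrrational A e j ↔ IsIrrational Aᗮ (n - e) j := by
  have he : e ≤ n := by omega
  refine ⟨IsIrrational.orthogonal he, fun h => ?_⟩
  have h' := h.orthogonal (Nat.sub_le n e)
  rwa [orthogonal_orthogonal, Nat.sub_sub_self he] at h'
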